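/- Let D be a positive nonsquare integer and S_D = {(a,b,c) ∈ ℤ³ : b²−4ac = D, a>0, c<0, a+b+c<0}. Then Σ_{S_D} (ab/c − bc/a) = 0, where the sum is of rational numbers. -/
import Mathlib

/-- `S_D = {(a,b,c) ∈ ℤ³ : b² − 4ac = D, a > 0, c < 0, a + b + c < 0}`. -/
def SD (D : ℤ) : Set (ℤ × ℤ × ℤ) :=
  {p | p.2.1 ^ 2 - 4 * p.1 * p.2.2 = D ∧ 0 < p.1 ∧ p.2.2 < 0 ∧ p.1 + p.2.1 + p.2.2 < 0}

/-- The larger set `S'_D` without the `a+b+c<0` condition. -/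
def SD' (D : ℤ) : Set (ℤ × ℤ × ℤ) :=
  {p | p.2.1 ^ 2 - 4 * p.1 * p.2.2 = D ∧ 0 < p.1 ∧ p.2.2 < 0}

lemma SD'_finite (D : ℤ) (hD : 0 < D) : (SD' D).Finite := by
  apply Set.Finite.subset (Set.finite_Icc ((1 : ℤ), (-D, -D)) (D, (D, -1)))
  rintro ⟨a, b, c⟩ ⟨hdisc, ha, hc⟩
  simp only [Set.mem_Icc, Prod.le_def]
  dsimp only at hdisc ha hc ⊢
  refine ⟨⟨ha, ?_, ?_⟩, ?_, ?_, ?_⟩ <;>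
    nlinarith [sq_nonneg b, sq_nonneg (b - 1), sq_nonneg (b + 1)]

lemma sigma_invariant (x y z : ℚ) :
    (-z) * (-y) / (-x) - (-y) * (-x) / (-z) = x * y / z - y * z / x := by
  rw [neg_mul_neg, neg_mul_neg, div_neg, div_neg, mul_comm z y, mul_comm y x]
  ring

/-- For `D` a positive nonsquare integer, `∑_{(a,b,c) ∈ S_D} (ab/c − bc/a) = 0`
as a sum of rational numbers. -/
theorem sum_ab_div_c_sub_bc_div_a_eq_zero (D : ℤ) (hD : 0 < D)
    (hns : ¬ IsSquare D) :
    ∃ hfin : (SD D).Finite,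
      ∑ p ∈ hfin.toFinset,
        ((p.1 : ℚ) * p.2.1 / p.2.2 - (p.2.1 : ℚ) * p.2.2 / p.1) = 0 := by
  have hfin' : (SD' D).Finite := SD'_finite D hD
  have hfin : (SD D).Finite :=
    hfin'.subset (fun p hp => ⟨hp.1, hp.2.1, hp.2.2.1⟩)
  refine ⟨hfin, ?_⟩
  set f : ℤ × ℤ × ℤ → ℚ := fun p =>
    ((p.1 : ℚ) * p.2.1 / p.2.2 - (p.2.1 : ℚ) * p.2.2 / p.1) with hf
  -- the sum over `S'_D` vanishes, via the involution `(a,b,c) ↦ (a,-b,c)`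
  have hsum' : ∑ p ∈ hfin'.toFinset, f p = 0 := by
    apply Finset.sum_involution (fun p _ => (p.1, -p.2.1, p.2.2))
    · rintro ⟨a, b, c⟩ _
      simp only [hf]
      push_cast
      ring
    · rintro ⟨a, b, c⟩ _ hne heq
      apply hne
      simp only [Prod.mk.injEq] at heq
      obtain ⟨-, hb, -⟩ := heq
      have hb0 : b = 0 := by omega
      simp [hf, hb0]
    · rintro ⟨a, b, c⟩ _
      simp
    · rintro ⟨a, b, c⟩ hp
      rw [Set.Finite.mem_toFinset] at hp ⊢
      obtain ⟨hdisc, ha, hc⟩ := hp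
      dsimp only at hdisc ha hc
      exact ⟨by dsimp only; rw [← hdisc]; ring, ha, hc⟩
  -- no element of `S'_D` has `a + b + c = 0`
  have hne0 : ∀ p ∈ SD' D, p.1 + p.2.1 + p.2.2 ≠ 0 := by
    rintro ⟨a, b, c⟩ ⟨hdisc, ha, hc⟩ h0
    dsimp only at hdisc ha hc h0
    exact hns ⟨2 * a + b, by nlinarith⟩
  classical
  have hsplit := Finset.sum_filter_add_sum_filter_not hfin'.toFinset
    (fun p => p.1 + p.2.1 + p.2.2 < 0) f
  have hA : hfin.toFinset =
      hfin'.toFinset.filter (fun p => p.1 + p.2.1 + p.2.2 < 0) := by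
    ext ⟨a, b, c⟩
    simp only [Set.Finite.mem_toFinset, Finset.mem_filter]
    constructor
    · rintro ⟨h1, h2, h3, h4⟩; exact ⟨⟨h1, h2, h3⟩, h4⟩
    · rintro ⟨⟨h1, h2, h3⟩, h4⟩; exact ⟨h1, h2, h3, h4⟩
  -- the two halves have equal sums via `(a,b,c) ↦ (-c,-b,-a)`
  have hBA : ∑ p ∈ hfin'.toFinset.filter (fun p => ¬ p.1 + p.2.1 + p.2.2 < 0), f p
      = ∑ p ∈ hfin'.toFinset.filter (fun p => p.1 + p.2.1 + p.2.2 < 0), f p := by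
    apply Finset.sum_nbij' (fun p => (-p.2.2, -p.2.1, -p.1)) (fun p => (-p.2.2, -p.2.1, -p.1))
    · rintro ⟨a, b, c⟩ hp
      simp only [Finset.mem_filter, Set.Finite.mem_toFinset] at hp ⊢
      obtain ⟨⟨hdisc, ha, hc⟩, hsum⟩ := hp
      have hne := hne0 (a, b, c) ⟨hdisc, ha, hc⟩
      dsimp only at hdisc ha hc hsum hne ⊢
      refine ⟨⟨by rw [← hdisc]; ring, by omega, by show -a < 0; omega⟩, by omega⟩
    · rintro ⟨a, b, c⟩ hp
      simp only [Finset.mem_filter, Set.Finite.mem_toFinset] at hp ⊢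
      obtain ⟨⟨hdisc, ha, hc⟩, hsum⟩ := hp
      dsimp only at hdisc ha hc hsum ⊢
      refine ⟨⟨by rw [← hdisc]; ring, by omega, by show -a < 0; omega⟩, by omega⟩
    · rintro ⟨a, b, c⟩ _; simp
    · rintro ⟨a, b, c⟩ _; simp
    · rintro ⟨a, b, c⟩ _
      simp only [hf]
      push_cast
      exact (sigma_invariant (a : ℚ) (b : ℚ) (c : ℚ)).symm
  rw [hBA, hsum'] at hsplit
  rw [hA]
  linarith [hsplit]
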